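/- arXiv:2005.09239 — 2 statements merged into one kernel-verified Lean document; each statement's English description precedes it below -/
import Mathlib

section
/- If P is a projection in M_s(ℂ) with P ≠ 0 and P ≠ I, then dist(P, ℂI_s) = 1/2. -/
/-!
Shifting by a scalar translates the spectrum, and the norm dominates the spectral radius,
so `‖P - μ • 1‖ ≥ max ‖1 - μ‖ ‖μ‖ ≥ 1/2` because both `0` and `1` lie in the spectrum of a
nontrivial idempotent. Conversely `2P - 1` is a self-adjoint unitary, hence of norm one in a
C⋆-algebra, so `μ = 1/2` attains the bound.
-/

open scoped Matrix.Norms.L2Operator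

namespace IsIdempotentElem

variable {R A : Type*} [CommRing R] [Ring A] [Algebra R A] {p : A}

theorem one_mem_spectrum (hp : IsIdempotentElem p) (h0 : p ≠ 0) : (1 : R) ∈ spectrum R p := by
  rw [spectrum.mem_iff, map_one]
  exact fun hunit => h0 (hunit.mul_left_eq_zero.mp hp.mul_one_sub_self)

theorem zero_mem_spectrum (hp : IsIdempotentElem p) (h1 : p ≠ 1) : (0 : R) ∈ spectrum R p :=
  spectrum.zero_mem_iff R |>.mpr fun hunit => h1 ((iff_eq_one_of_isUnit hunit).mp hp)

end IsIdempotentElem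

theorem spectrum.norm_sub_le_two_mul_norm_sub_smul_one {𝕜 A : Type*} [NormedField 𝕜]
    [NormedRing A] [NormedAlgebra 𝕜 A] [CompleteSpace A] [NormOneClass A] {a : A} {x y : 𝕜}
    (hx : x ∈ spectrum 𝕜 a) (hy : y ∈ spectrum 𝕜 a) (μ : 𝕜) :
    ‖x - y‖ ≤ 2 * ‖a - μ • 1‖ := by
  have hshift : ∀ z ∈ spectrum 𝕜 a, ‖z - μ‖ ≤ ‖a - μ • 1‖ := fun z hz => by
    rw [← Algebra.algebraMap_eq_smul_one]
    exact spectrum.norm_le_norm_of_mem <| spectrum.sub_singleton_eq a μ ▸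
      Set.sub_mem_sub hz (Set.mem_singleton μ)
  calc ‖x - y‖ = ‖(x - μ) - (y - μ)‖ := by rw [sub_sub_sub_cancel_right]
    _ ≤ ‖x - μ‖ + ‖y - μ‖ := norm_sub_le _ _
    _ ≤ 2 * ‖a - μ • 1‖ := by linarith [hshift x hx, hshift y hy]

namespace IsStarProjection

variable {A : Type*} [NormedRing A] [StarRing A] [CStarRing A] [NormedAlgebra ℂ A] {p : A}

theorem norm_sub_half_smul_one [Nontrivial A] (hp : IsStarProjection p) :
    ‖p - (1 / 2 : ℂ) • 1‖ = 1 / 2 := by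
  have hsymm : p - (1 / 2 : ℂ) • 1 = (1 / 2 : ℂ) • (2 * p - 1) := by
    rw [smul_sub, two_mul, smul_add, ← add_smul]
    norm_num
  rw [hsymm, norm_smul, CStarRing.norm_of_mem_unitary hp.two_mul_sub_one_mem_unitary]
  norm_num

theorem infDist_smul_one_eq_half [CompleteSpace A] (hp : IsStarProjection p) (h0 : p ≠ 0)
    (h1 : p ≠ 1) : Metric.infDist p {M : A | ∃ μ : ℂ, M = μ • 1} = 1 / 2 := by
  have : Nontrivial A := nontrivial_of_ne p 0 h0
  apply le_antisymm
  · calc Metric.infDist p {M : A | ∃ μ : ℂ, M = μ • 1} ≤ dist p ((1 / 2 : ℂ) • 1) :=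
          Metric.infDist_le_dist_of_mem ⟨1 / 2, rfl⟩
      _ = 1 / 2 := by rw [dist_eq_norm, hp.norm_sub_half_smul_one]
  · have hne : {M : A | ∃ μ : ℂ, M = μ • 1}.Nonempty := ⟨_, 0, rfl⟩
    rw [Metric.le_infDist hne]
    rintro _ ⟨μ, rfl⟩
    have hgap : ‖(1 : ℂ) - 0‖ ≤ 2 * ‖p - μ • 1‖ :=
      spectrum.norm_sub_le_two_mul_norm_sub_smul_one
        (hp.isIdempotentElem.one_mem_spectrum h0) (hp.isIdempotentElem.zero_mem_spectrum h1) μ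
    rw [sub_zero, norm_one] at hgap
    rw [dist_eq_norm]
    linarith

end IsStarProjection

/-- A nontrivial projection in `M_s(ℂ)` has operator-norm distance `1/2`
to the scalar matrices. -/
theorem stmt_1 (s : ℕ) (P : Matrix (Fin s) (Fin s) ℂ)
    (hsa : IsSelfAdjoint P) (hidem : IsIdempotentElem P)
    (h0 : P ≠ 0) (h1 : P ≠ 1) :
    Metric.infDist P {M : Matrix (Fin s) (Fin s) ℂ | ∃ μ : ℂ, M = μ • 1} = 1 / 2 :=
  IsStarProjection.infDist_smul_one_eq_half ⟨hidem, hsa⟩ h0 h1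
end

section
/- Let (X, α, β) be a regular s-equivalence system with X a compact metric space. Then every central sequence in C(X, α, β, M_s(ℂ)) is trivial: if (a_n) is a bounded sequence of elements with ‖f a_n − a_n f‖ → 0 for every f ∈ C(X, α, β, M_s(ℂ)), then dist(a_n, Z) → 0 where Z is the center of C(X, α, β, M_s(ℂ)). -/
/-!
Regularity provides, around every point `x`, an element of the algebra that is close to a matrix
unit `E_ij`. Because `(a_n)` is bounded, its asymptotic commutation with these elements forces
`[E_ij, a_n(y)] → 0` locally uniformly in `y`, hence uniformly by compactness. The identity
`s • A - tr A • 1 = ∑ E_ij [E_ji, A]` then makes `a_n` uniformly close to `tr (a_n(·)) / s • 1`,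
which is central because `β` acts by unitary conjugation and so preserves the trace.
-/

open Filter Topology
open scoped Matrix.Norms.L2Operator

lemma norm_commutator_le {R : Type*} [NormedRing R] (e f a : R) :
    ‖e * a - a * e‖ ≤ ‖f * a - a * f‖ + 2 * ‖e - f‖ * ‖a‖ := by
  calc ‖e * a - a * e‖ = ‖(f * a - a * f) + ((e - f) * a + a * (f - e))‖ := by noncomm_ring
    _ ≤ ‖f * a - a * f‖ + (‖e - f‖ * ‖a‖ + ‖a‖ * ‖f - e‖) := by
        refine (norm_add_le _ _).trans (add_le_add_right ?_ _)
        exact (norm_add_le _ _).trans (add_le_add (norm_mul_le _ _) (norm_mul_le _ _))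
    _ = ‖f * a - a * f‖ + 2 * ‖e - f‖ * ‖a‖ := by rw [norm_sub_rev f e]; ring

namespace Matrix

variable {𝕜 m : Type*} [RCLike 𝕜] [Fintype m] [DecidableEq m]

lemma norm_single_one (i j : m) : ‖single i j (1 : 𝕜)‖ = 1 := by
  have h : ‖single i j (1 : 𝕜)‖ * ‖single i j (1 : 𝕜)‖ = 1 := by
    rw [← l2_opNorm_conjTranspose_mul_self, conjTranspose_single, star_one,
      single_mul_single_same, one_mul, ← diagonal_single, l2_opNorm_diagonal, Pi.norm_single,
      norm_one]
  exact (mul_self_eq_one_iff.mp h).resolve_right (by linarith [norm_nonneg (single i j (1 : 𝕜))])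

lemma card_smul_sub_trace_smul_one (A : Matrix m m 𝕜) :
    (Fintype.card m : 𝕜) • A - trace A • 1 =
      ∑ i, ∑ j, single i j 1 * (single j i 1 * A - A * single j i 1) := by
  simp only [mul_sub, ← mul_assoc, single_mul_single_same, single_mul_mul_single, one_mul, mul_one,
    Finset.sum_sub_distrib]
  congr 1
  · simp only [Finset.sum_const, Finset.card_univ, ← Finset.smul_sum, ← Finset.sum_mul,
      sum_single_one, one_mul, Nat.cast_smul_eq_nsmul]
  · rw [Finset.sum_comm, trace, Finset.sum_smul]
    simp only [sum_single_eq_diagonal, smul_one_eq_diagonal, diag_apply]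

lemma norm_sub_trace_div_smul_one_le (A : Matrix m m 𝕜) :
    ‖A - (trace A / Fintype.card m) • 1‖ ≤
      (Fintype.card m : ℝ)⁻¹ * ∑ i, ∑ j, ‖single i j 1 * A - A * single i j 1‖ := by
  rcases isEmpty_or_nonempty m with hm | hm
  · simp [Subsingleton.elim A 0]
  have hcard : (Fintype.card m : 𝕜) ≠ 0 := Nat.cast_ne_zero.mpr Fintype.card_ne_zero
  have hsplit : A - (trace A / Fintype.card m) • 1 =
      (Fintype.card m : 𝕜)⁻¹ • ((Fintype.card m : 𝕜) • A - trace A • 1) := by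
    rw [smul_sub, smul_smul, inv_mul_cancel₀ hcard, one_smul, smul_smul, inv_mul_eq_div]
  rw [hsplit, norm_smul, norm_inv, RCLike.norm_natCast, card_smul_sub_trace_smul_one]
  gcongr
  calc ‖∑ i, ∑ j, single i j (1 : 𝕜) * (single j i 1 * A - A * single j i 1)‖
      ≤ ∑ i, ∑ j, ‖single j i 1 * A - A * single j i 1‖ := by
        refine (norm_sum_le _ _).trans (Finset.sum_le_sum fun i _ => ?_)
        refine (norm_sum_le _ _).trans (Finset.sum_le_sum fun j _ => ?_)
        exact (norm_mul_le _ _).trans_eq (by rw [norm_single_one, one_mul])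
    _ = ∑ i, ∑ j, ‖single i j 1 * A - A * single i j 1‖ := Finset.sum_comm

end Matrix

namespace ContinuousMap

lemma tendsto_norm_const_mul_sub_mul_const {X R ι : Type*} [TopologicalSpace X] [CompactSpace X]
    [NormedRing R] {l : Filter ι} {a : ι → C(X, R)} (hbdd : ∃ C, ∀ i, ‖a i‖ ≤ C) (e : R)
    (he : ∀ x, ∃ f : C(X, R), f x = e ∧ Tendsto (fun i => ‖f * a i - a i * f‖) l (𝓝 0)) :
    Tendsto (fun i => ‖const X e * a i - a i * const X e‖) l (𝓝 0) := by
  rw [← tendsto_zero_iff_norm_tendsto_zero, tendsto_iff_tendstoUniformly,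
    ← tendstoLocallyUniformly_iff_tendstoUniformly_of_compactSpace,
    Metric.tendstoLocallyUniformly_iff]
  intro ε hε x
  obtain ⟨C, hC⟩ := hbdd
  obtain ⟨f, hfx, hf⟩ := he x
  set C' := max C 0
  have hC' : 0 ≤ C' := le_max_right _ _
  set η := ε / (1 + 2 * C')
  have hη : 0 < η := by positivity
  have hnear : {y | ‖e - f y‖ < η} ∈ 𝓝 x :=
    (isOpen_lt (continuous_const.sub f.continuous).norm continuous_const).mem_nhds (by simpa [hfx])
  refine ⟨_, hnear, (hf.eventually_lt_const hη).mono fun i hi y hy => ?_⟩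
  have hay : ‖a i y‖ ≤ C' := (norm_coe_le_norm _ y).trans ((hC i).trans (le_max_left _ _))
  have hfay : ‖f y * a i y - a i y * f y‖ ≤ ‖f * a i - a i * f‖ :=
    norm_coe_le_norm (f * a i - a i * f) y
  calc dist 0 (e * a i y - a i y * e) ≤ ‖f y * a i y - a i y * f y‖ + 2 * ‖e - f y‖ * ‖a i y‖ := by
        rw [dist_zero_left]; exact norm_commutator_le _ _ _
    _ < η + 2 * η * C' := by
        refine add_lt_add_of_lt_of_le (hfay.trans_lt hi) ?_
        gcongr
        exact hy.le
    _ = ε := by unfold η; field_simp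

variable {X 𝕜 m : Type*} [TopologicalSpace X] [RCLike 𝕜] [Fintype m] [DecidableEq m]

/-- The function `τ_s ∘ f` of the paper, with values in the scalar matrices. -/
noncomputable def scalarPart (f : C(X, Matrix m m 𝕜)) : C(X, Matrix m m 𝕜) where
  toFun x := (Matrix.trace (f x) / Fintype.card m) • 1
  continuous_toFun := (f.continuous.matrix_trace.div_const _).smul continuous_const

@[simp]
lemma scalarPart_apply (f : C(X, Matrix m m 𝕜)) (x : X) :
    scalarPart f x = (Matrix.trace (f x) / Fintype.card m) • 1 :=
  rfl

lemma commute_scalarPart (f g : C(X, Matrix m m 𝕜)) : Commute (scalarPart f) g :=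
  ext fun x => ((Commute.one_left (g x)).smul_left _).eq

lemma scalarPart_conj_eq {α : Set (X × X)} {β : X → X → Matrix m m 𝕜}
    (hunit : ∀ x y, (x, y) ∈ α → β x y ∈ Matrix.unitaryGroup m 𝕜) {f : C(X, Matrix m m 𝕜)}
    (hf : ∀ x y, (x, y) ∈ α → β x y * f x * star (β x y) = f y) :
    ∀ x y, (x, y) ∈ α → β x y * scalarPart f x * star (β x y) = scalarPart f y := by
  intro x y hxy
  have htrace : Matrix.trace (f y) = Matrix.trace (f x) := by
    rw [← hf x y hxy, Matrix.trace_mul_cycle, Unitary.star_mul_self_of_mem (hunit x y hxy),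
      one_mul]
  rw [scalarPart_apply, scalarPart_apply, htrace, mul_smul_comm, mul_one, smul_mul_assoc,
    Unitary.mul_star_self_of_mem (hunit x y hxy)]

lemma norm_sub_scalarPart_le [CompactSpace X] (f : C(X, Matrix m m 𝕜)) :
    ‖f - scalarPart f‖ ≤ (Fintype.card m : ℝ)⁻¹ *
      ∑ i, ∑ j, ‖const X (Matrix.single i j 1) * f - f * const X (Matrix.single i j 1)‖ := by
  refine (norm_le _ (by positivity)).2 fun x =>
    (Matrix.norm_sub_trace_div_smul_one_le (f x)).trans ?_
  gcongr with i _ j _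
  exact norm_coe_le_norm (const X (Matrix.single i j 1) * f - f * const X (Matrix.single i j 1)) x

end ContinuousMap

theorem stmt_12_general {X : Type*} [MetricSpace X] [CompactSpace X] (s : ℕ)
    (α : Set (X × X))
    (β : X → X → Matrix (Fin s) (Fin s) ℂ)
    (hunit : ∀ x y : X, (x, y) ∈ α → β x y ∈ Matrix.unitaryGroup (Fin s) ℂ)
    -- the algebra `C(X, α, β, M_s(ℂ))` as a subset of `C(X, M_s(ℂ))`
    (S : Set C(X, Matrix (Fin s) (Fin s) ℂ))
    (hS : S = {f : C(X, Matrix (Fin s) (Fin s) ℂ) |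
      ∀ x y : X, (x, y) ∈ α → β x y * f x * star (β x y) = f y})
    -- regularity
    (hreg : ∀ (x : X) (T : Matrix (Fin s) (Fin s) ℂ), ∃ f ∈ S, f x = T)
    -- a central sequence in `C(X, α, β, M_s(ℂ))`
    (a : ℕ → C(X, Matrix (Fin s) (Fin s) ℂ)) (haS : ∀ n, a n ∈ S)
    (hbdd : ∃ C : ℝ, ∀ n, ‖a n‖ ≤ C)
    (hcentral : ∀ f ∈ S,
      Filter.Tendsto (fun n => ‖f * a n - a n * f‖) Filter.atTop (nhds 0)) :
    Filter.Tendsto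
      (fun n => Metric.infDist (a n) {z ∈ S | ∀ f ∈ S, z * f = f * z})
      Filter.atTop (nhds 0) := by
  have hcenter : ∀ n, (a n).scalarPart ∈ {z ∈ S | ∀ f ∈ S, z * f = f * z} := by
    subst hS
    exact fun n =>
      ⟨ContinuousMap.scalarPart_conj_eq hunit (haS n), fun f _ => (a n).commute_scalarPart f⟩
  have hmatrixUnits : ∀ i j, Tendsto (fun n => ‖ContinuousMap.const X (Matrix.single i j (1 : ℂ)) * a n -
      a n * ContinuousMap.const X (Matrix.single i j 1)‖) atTop (𝓝 0) := fun i j =>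
    ContinuousMap.tendsto_norm_const_mul_sub_mul_const hbdd _ fun x =>
      let ⟨f, hfS, hfx⟩ := hreg x (Matrix.single i j 1)
      ⟨f, hfx, hcentral f hfS⟩
  refine squeeze_zero (fun n => Metric.infDist_nonneg) (fun n =>
    (Metric.infDist_le_dist_of_mem (hcenter n)).trans_eq (dist_eq_norm _ _) |>.trans
      (a n).norm_sub_scalarPart_le) ?_
  simpa using (tendsto_finsetSum _ fun i _ => tendsto_finsetSum _ fun j _ => hmatrixUnits i j).const_mul
    ((Fintype.card (Fin s) : ℝ)⁻¹)

/-- For a regular `s`-equivalence system `(X, α, β)`, every central sequence in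
`C(X, α, β, M_s(ℂ))` is trivial: its distance to the center tends to `0`. -/
theorem stmt_12 {X : Type*} [MetricSpace X] [CompactSpace X] (s : ℕ)
    (α : Set (X × X)) (hclosed : IsClosed α)
    (hrefl : ∀ x : X, (x, x) ∈ α)
    (hsymm : ∀ x y : X, (x, y) ∈ α → (y, x) ∈ α)
    (htrans : ∀ x y z : X, (x, y) ∈ α → (y, z) ∈ α → (x, z) ∈ α)
    (β : X → X → Matrix (Fin s) (Fin s) ℂ)
    (hunit : ∀ x y : X, (x, y) ∈ α → β x y ∈ Matrix.unitaryGroup (Fin s) ℂ)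
    (hcocycle : ∀ x y z : X, (x, y) ∈ α → (y, z) ∈ α →
      star (β x y) * β x z = β y z)
    -- the algebra `C(X, α, β, M_s(ℂ))` as a subset of `C(X, M_s(ℂ))`
    (S : Set C(X, Matrix (Fin s) (Fin s) ℂ))
    (hS : S = {f : C(X, Matrix (Fin s) (Fin s) ℂ) |
      ∀ x y : X, (x, y) ∈ α → β x y * f x * star (β x y) = f y})
    -- regularity
    (hreg : ∀ (x : X) (T : Matrix (Fin s) (Fin s) ℂ), ∃ f ∈ S, f x = T)
    -- a central sequence in `C(X, α, β, M_s(ℂ))`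
    (a : ℕ → C(X, Matrix (Fin s) (Fin s) ℂ)) (haS : ∀ n, a n ∈ S)
    (hbdd : ∃ C : ℝ, ∀ n, ‖a n‖ ≤ C)
    (hcentral : ∀ f ∈ S,
      Filter.Tendsto (fun n => ‖f * a n - a n * f‖) Filter.atTop (nhds 0)) :
    Filter.Tendsto
      (fun n => Metric.infDist (a n) {z ∈ S | ∀ f ∈ S, z * f = f * z})
      Filter.atTop (nhds 0) :=
  stmt_12_general s α β hunit S hS hreg a haS hbdd hcentral
end
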